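/- g(K_4, K_6) ≤ 14. In particular, g(K_4, K_6) < (4-1)(6-1) = 15. -/

import Mathlib

open Finset

/-- Edge set of the complete bipartite graph with parts `A` and `B`. -/
def bicliqueEdges {V : Type*} (A B : Finset V) : Set (Sym2 V) :=
  {e | ∃ a ∈ A, ∃ b ∈ B, e = s(a, b)}

/-- `f_2(G)`: minimum number of complete bipartite subgraphs needed to partition
the edge set of the graph `G`. -/
noncomputable def f2 {V : Type*} (G : SimpleGraph V) : ℕ :=
  sInf {m | ∃ A B : Fin m → Finset V,
    (∀ k, Disjoint (A k) (B k)) ∧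
    (∀ k, bicliqueEdges (A k) (B k) ⊆ G.edgeSet) ∧
    ∀ e ∈ G.edgeSet, ∃! k, e ∈ bicliqueEdges (A k) (B k)}

/-- Edge set of the complete `r`-partite `r`-uniform hypergraph with parts `P`. -/
def crossEdges {V : Type*} [DecidableEq V] {r : ℕ} (P : Fin r → Finset V) : Set (Finset V) :=
  {e | ∃ f : Fin r → V, (∀ i, f i ∈ P i) ∧ e = Finset.image f Finset.univ}

/-- `f_r(n)`: minimum number of complete `r`-partite `r`-uniform hypergraphs needed to
partition the edge set of the complete `r`-uniform hypergraph on `n` vertices. -/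
noncomputable def fr (r n : ℕ) : ℕ :=
  sInf {m | ∃ P : Fin m → Fin r → Finset (Fin n),
    (∀ k, Pairwise (Function.onFun Disjoint (P k))) ∧
    ∀ e : Finset (Fin n), e.card = r → ∃! k, e ∈ crossEdges (P k)}

/-- `g(G,H)`: minimum number of blocks (products of edge sets of complete
bipartite subgraphs of `G` and `H` respectively) needed to partition `E(G) × E(H)`. -/
noncomputable def gGH {V W : Type*} (G : SimpleGraph V) (H : SimpleGraph W) : ℕ :=
  sInf {m | ∃ A B : Fin m → Finset V, ∃ C D : Fin m → Finset W,
    (∀ k, Disjoint (A k) (B k)) ∧ (∀ k, Disjoint (C k) (D k)) ∧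
    (∀ k, bicliqueEdges (A k) (B k) ⊆ G.edgeSet) ∧
    (∀ k, bicliqueEdges (C k) (D k) ⊆ H.edgeSet) ∧
    ∀ p : Sym2 V × Sym2 W, p.1 ∈ G.edgeSet → p.2 ∈ H.edgeSet →
      ∃! k, p.1 ∈ bicliqueEdges (A k) (B k) ∧ p.2 ∈ bicliqueEdges (C k) (D k)}

/-- `g(n) = g(K_n, K_n)`. -/
noncomputable def gn (n : ℕ) : ℕ :=
  gGH (SimpleGraph.completeGraph (Fin n)) (SimpleGraph.completeGraph (Fin n))


lemma mem_bicliqueEdges {V : Type*} {A B : Finset V} {a b : V} :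
    s(a, b) ∈ bicliqueEdges A B ↔ (a ∈ A ∧ b ∈ B) ∨ (b ∈ A ∧ a ∈ B) := by
  constructor
  · rintro ⟨x, hx, y, hy, h⟩
    rw [Sym2.eq_iff] at h
    rcases h with ⟨rfl, rfl⟩ | ⟨rfl, rfl⟩
    · exact Or.inl ⟨hx, hy⟩
    · exact Or.inr ⟨hx, hy⟩
  · rintro (⟨ha, hb⟩ | ⟨hb, ha⟩)
    · exact ⟨a, ha, b, hb, rfl⟩
    · exact ⟨b, hb, a, ha, Sym2.eq_swap⟩

lemma biclique_subset_complete {V : Type*} {A B : Finset V} (h : Disjoint A B) :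
    bicliqueEdges A B ⊆ (SimpleGraph.completeGraph V).edgeSet := by
  rintro e ⟨x, hx, y, hy, rfl⟩
  simp only [SimpleGraph.mem_edgeSet, SimpleGraph.completeGraph, SimpleGraph.top_adj]
  exact fun hxy => (Finset.disjoint_left.mp h hx) (hxy ▸ hy)

def AA14 : Fin 14 → Finset (Fin 4) :=
  ![{0,1},{0,1},{0,2},{0,2},{0,3},{0,3},{0},{2},{0},{1},{0},{0},{1},{1}]
def BB14 : Fin 14 → Finset (Fin 4) :=
  ![{2,3},{2,3},{1,3},{1,3},{1,2},{1,2},{1},{3},{2},{3},{3},{3},{2},{2}]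
def CC14 : Fin 14 → Finset (Fin 6) :=
  ![{0,4},{2,4},{2},{1},{4},{5},{0,2,4},{0,2,4},{0,3,5},{0,3,5},{2,5},{0},{2,5},{0}]
def DD14 : Fin 14 → Finset (Fin 6) :=
  ![{3},{1},{0,5},{3,5},{0,2,5},{0,3},{1,3},{1,3},{1,2},{1,2},{3,4},{1,4,5},{3,4},{1,4,5}]

lemma gGH_le_14 : gGH (SimpleGraph.completeGraph (Fin 4)) (SimpleGraph.completeGraph (Fin 6)) ≤ 14 := by
  apply Nat.sInf_le
  have hAB : ∀ k, Disjoint (AA14 k) (BB14 k) := by decide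
  have hCD : ∀ k, Disjoint (CC14 k) (DD14 k) := by decide
  refine ⟨AA14, BB14, CC14, DD14, hAB, hCD,
    fun k => biclique_subset_complete (hAB k),
    fun k => biclique_subset_complete (hCD k), ?_⟩
  rintro ⟨e, f⟩
  induction e using Sym2.ind with | _ a b =>
  induction f using Sym2.ind with | _ c d =>
  simp only [SimpleGraph.mem_edgeSet, SimpleGraph.completeGraph, SimpleGraph.top_adj,
    mem_bicliqueEdges, ExistsUnique]
  revert a b c d
  set_option synthInstance.maxSize 4000 in decide

theorem stmt15 :
    gGH (SimpleGraph.completeGraph (Fin 4)) (SimpleGraph.completeGraph (Fin 6)) ≤ 14 ∧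
    gGH (SimpleGraph.completeGraph (Fin 4)) (SimpleGraph.completeGraph (Fin 6)) < (4 - 1) * (6 - 1) := by
  refine ⟨gGH_le_14, lt_of_le_of_lt gGH_le_14 (by norm_num)⟩
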